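/- Let A be an infinite set of propositional atoms and ⟨F_c, 𝒱, ⊨⟩ the classical propositional semantic structure over A. Then there does not exist a normal characterization of the family of all pivotal consequence relations; that is, there is no cardinal λ ≤ |F_c| and relation Φ on P(F_c)^{2λ} such that for every relation |~ on P(F_c) × F_c, |~ is a pivotal consequence relation if and only if for all Γ_1, …, Γ_λ ⊆ F_c, the tuple (Γ_1, …, Γ_λ, C_|~(Γ_1), …, C_|~(Γ_λ)) belongs to Φ. -/

import Mathlib

/-- Classical propositional formulas over a set `A` of atoms, with constants
`false`, `true` and connectives `¬`, `∨`, `∧`. -/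
inductive PropForm (A : Type u) : Type u
  | atom : A → PropForm A
  | fls : PropForm A
  | tru : PropForm A
  | neg : PropForm A → PropForm A
  | disj : PropForm A → PropForm A → PropForm A
  | conj : PropForm A → PropForm A → PropForm A

/-- Classical two-valued evaluation of a formula under a valuation `v : A → Bool`. -/
def PropForm.eval {A : Type u} (v : A → Bool) : PropForm A → Bool
  | atom a => v a
  | fls => false
  | tru => true
  | neg φ => !(φ.eval v)
  | disj φ ψ => φ.eval v || ψ.eval v
  | conj φ ψ => φ.eval v && ψ.eval v

/-- Classical satisfaction: `v ⊨ α` iff `α` evaluates to `true` under `v`. -/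
def satC {A : Type u} (v : A → Bool) (α : PropForm A) : Prop :=
  α.eval v = true

/-- The set of models of a set of formulas `Γ`. -/
def modSet {F V : Type*} (sat : V → F → Prop) (Γ : Set F) : Set V :=
  {v | ∀ α ∈ Γ, sat v α}

/-- `D`: the family of definable sets of valuations. -/
def defFam {F V : Type*} (sat : V → F → Prop) : Set (Set V) :=
  {S | ∃ Γ : Set F, modSet sat Γ = S}

/-- `C_|~(Γ) = {α | Γ |~ α}`. -/
def relC {F : Type*} (rel : Set F → F → Prop) (Γ : Set F) : Set F :=
  {α | rel Γ α}

/-- `|~` is a pivotal consequence relation: there is a strongly coherent choice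
function `μ` from `D` to `P(𝒱)` defining it. -/
def isPivotal {F V : Type*} (sat : V → F → Prop) (rel : Set F → F → Prop) : Prop :=
  ∃ μ : Set V → Set V,
    (∀ A ∈ defFam sat, μ A ⊆ A) ∧
    (∀ A ∈ defFam sat, ∀ B ∈ defFam sat, μ B ∩ A ⊆ μ A) ∧
    (∀ (Γ : Set F) (α : F), rel Γ α ↔ μ (modSet sat Γ) ⊆ modSet sat {α})


/-!
Let `Γ |~ α` hold iff `α` fails in at most `|F_c|` models of `Γ`. This relation is not pivotal:
`Th(v)` has the single model `v`, so `Th(v) |~ false`, whereas `∅ |≁ false` because there are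
`2^|A| > |F_c|` valuations; strong coherence would then give `v ∈ μ(𝒱) ∩ {v} ⊆ μ({v}) = ∅`.
Yet on any `λ ≤ |F_c|` premise sets it agrees with the pivotal relation of `μ(V) = V \ B`, where
`B` is the union of those sets of counter-models along the family that have size at most `|F_c|`;
there are at most `|F_c|` of them, so `|B| ≤ |F_c|` and no larger set of counter-models is
exhausted by removing `B`. Hence no `Φ` separates the two relations.
-/

open Cardinal

namespace PropForm

variable {A : Type u}

/-- Formulas as well-founded trees: a node is an atom, a constant (`Bool`), a negation (one child)
or a disjunction/conjunction (`Bool`, two children). -/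
def children : A ⊕ Bool ⊕ Unit ⊕ Bool → Type u
  | .inl _ | .inr (.inl _) => PEmpty
  | .inr (.inr (.inl _)) => PUnit
  | .inr (.inr (.inr _)) => ULift Bool

instance (c : A ⊕ Bool ⊕ Unit ⊕ Bool) : Finite (children c) := by
  rcases c with _ | _ | _ | _ <;> dsimp only [children] <;> infer_instance

def ofNode : (Σ c, children (A := A) c → PropForm A) → PropForm A
  | ⟨.inl a, _⟩ => atom a
  | ⟨.inr (.inl b), _⟩ => if b then tru else fls
  | ⟨.inr (.inr (.inl _)), f⟩ => neg (f ⟨⟩)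
  | ⟨.inr (.inr (.inr b)), f⟩ => (if b then conj else disj) (f ⟨false⟩) (f ⟨true⟩)

theorem surjective_elim_ofNode :
    Function.Surjective (WType.elim (PropForm A) (ofNode (A := A))) := by
  intro φ
  induction φ with
  | atom a => exact ⟨⟨.inl a, PEmpty.elim⟩, rfl⟩
  | fls => exact ⟨⟨.inr (.inl false), PEmpty.elim⟩, rfl⟩
  | tru => exact ⟨⟨.inr (.inl true), PEmpty.elim⟩, rfl⟩
  | neg φ ih =>
    obtain ⟨t, rfl⟩ := ih
    exact ⟨⟨.inr (.inr (.inl ())), fun _ => t⟩, rfl⟩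
  | disj φ ψ ihφ ihψ =>
    obtain ⟨t, rfl⟩ := ihφ
    obtain ⟨s, rfl⟩ := ihψ
    exact ⟨⟨.inr (.inr (.inr false)), fun b => if b.down then s else t⟩, rfl⟩
  | conj φ ψ ihφ ihψ =>
    obtain ⟨t, rfl⟩ := ihφ
    obtain ⟨s, rfl⟩ := ihψ
    exact ⟨⟨.inr (.inr (.inr true)), fun b => if b.down then s else t⟩, rfl⟩

theorem mk_le [Infinite A] : #(PropForm A) ≤ #A :=
  calc #(PropForm A) ≤ #(WType (children (A := A))) := mk_le_of_surjective surjective_elim_ofNode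
    _ ≤ max #(A ⊕ Bool ⊕ Unit ⊕ Bool) ℵ₀ := WType.cardinalMk_le_max_aleph0_of_finite
    _ = #A := by
      have hA := aleph0_le_mk A
      have h5 : #A + 5 = #A := mod_cast add_nat_eq 5 hA
      simp [h5, hA]

instance [Infinite A] : Infinite (PropForm A) :=
  Infinite.of_injective atom fun _ _ => atom.inj

theorem mk_lt_mk_valuations [Infinite A] : #(PropForm A) < #(A → Bool) :=
  mk_le.trans_lt (by simpa using cantor #A)

theorem modSet_theory (v : A → Bool) : modSet satC {β : PropForm A | satC v β} = {v} := by
  refine Set.Subset.antisymm (fun w hw => funext fun a => ?_) fun _ hw β hβ => hw ▸ hβ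
  cases hva : v a
  · simpa [satC, eval, hva] using hw (neg (atom a)) (by simp [satC, eval, hva])
  · simpa [satC, eval, hva] using hw (atom a) (by simp [satC, eval, hva])

end PropForm

section

variable {F W : Type u} (sat : W → F → Prop)

def counterModels (Γ : Set F) (α : F) : Set W :=
  {w | w ∈ modSet sat Γ ∧ ¬ sat w α}

def fewCounterModelsRel (κ : Cardinal.{u}) (Γ : Set F) (α : F) : Prop :=
  #(counterModels sat Γ α) ≤ κ

def restrictRel (V : Set W) (Γ : Set F) (α : F) : Prop :=
  V ∩ modSet sat Γ ⊆ modSet sat {α}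

variable {sat}

theorem mem_modSet_singleton {w : W} {α : F} : w ∈ modSet sat {α} ↔ sat w α := by
  simp [modSet]

theorem modSet_empty : modSet sat (∅ : Set F) = Set.univ := by
  simp [modSet]

theorem isPivotal_restrictRel (V : Set W) : isPivotal sat (restrictRel sat V) :=
  ⟨(V ∩ ·), fun _ _ => Set.inter_subset_right,
    fun _ _ _ _ _ hv => ⟨hv.1.1, hv.2⟩, fun _ _ => Iff.rfl⟩

theorem restrictRel_compl_iff {B : Set W} {Γ : Set F} {α : F} :
    restrictRel sat Bᶜ Γ α ↔ counterModels sat Γ α ⊆ B := by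
  simp only [restrictRel, counterModels, Set.subset_def, Set.mem_inter_iff, Set.mem_compl_iff,
    mem_modSet_singleton, Set.mem_ofPred_eq]
  grind

theorem exists_restrictRel_eq_on {κ : Cardinal.{u}} (hκ : ℵ₀ ≤ κ) {ι : Type u} (hι : #ι ≤ κ)
    (hF : #F ≤ κ) (G : ι → Set F) :
    ∃ V : Set W, ∀ i, relC (fewCounterModelsRel sat κ) (G i) = relC (restrictRel sat V) (G i) := by
  let small := {p : ι × F // #(counterModels sat (G p.1) p.2) ≤ κ}
  let B := ⋃ p : small, counterModels sat (G p.1.1) p.1.2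
  have hB : #B ≤ κ :=
    calc #B ≤ #small * ⨆ p : small, #(counterModels sat (G p.1.1) p.1.2) := mk_iUnion_le _
      _ ≤ κ * κ := by
        gcongr
        · calc #small ≤ #(ι × F) := mk_subtype_le _
            _ ≤ κ * κ := by simpa using mul_le_mul' hι hF
            _ = κ := mul_eq_self hκ
        · exact ciSup_le' fun p => p.2
      _ = κ := mul_eq_self hκ
  refine ⟨Bᶜ, fun i => Set.ext fun α => ?_⟩
  simp only [relC, Set.mem_ofPred_eq, restrictRel_compl_iff, fewCounterModelsRel]
  exact ⟨fun h => Set.subset_iUnion_of_subset ⟨(i, α), h⟩ le_rfl,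
    fun h => (mk_le_mk_of_subset h).trans hB⟩

theorem not_isPivotal_fewCounterModelsRel (hsingleton : ∀ v : W, {v} ∈ defFam sat) {f : F}
    (hf : ∀ v, ¬ sat v f) {κ : Cardinal.{u}} (hκ₁ : 1 ≤ κ) (hκ : κ < #W) :
    ¬ isPivotal sat (fewCounterModelsRel sat κ) := by
  rintro ⟨μ, -, hcoh, hrel⟩
  have hf_empty : modSet sat {f} = ∅ := Set.eq_empty_of_forall_notMem fun v hv =>
    hf v (mem_modSet_singleton.mp hv)
  have hμ_singleton (v : W) : μ {v} = ∅ := by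
    obtain ⟨Γ, hΓ⟩ := hsingleton v
    have hsmall : fewCounterModelsRel sat κ Γ f :=
      calc #(counterModels sat Γ f) ≤ #({v} : Set W) :=
            mk_le_mk_of_subset fun w hw => hΓ ▸ hw.1
        _ ≤ κ := by rwa [mk_singleton]
    simpa [← hΓ, hf_empty] using (hrel Γ f).mp hsmall
  have hlarge : ¬ fewCounterModelsRel sat κ ∅ f := by
    have : counterModels sat ∅ f = Set.univ := by
      ext v; simp [counterModels, modSet_empty, hf]
    simpa [fewCounterModelsRel, this] using hκ
  obtain ⟨v, hv⟩ : (μ Set.univ).Nonempty := by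
    refine Set.nonempty_iff_ne_empty.mpr fun h => hlarge ((hrel ∅ f).mpr ?_)
    simp [modSet_empty, h]
  simpa [hμ_singleton v] using
    hcoh {v} (hsingleton v) Set.univ ⟨∅, modSet_empty⟩ ⟨hv, rfl⟩

end

theorem not_exists_normal_characterization {F ι : Type*} (P : (Set F → F → Prop) → Prop)
    (rel : Set F → F → Prop) (hrel : ¬ P rel)
    (hlocal : ∀ G : ι → Set F, ∃ rel', P rel' ∧ ∀ i, relC rel (G i) = relC rel' (G i)) :
    ¬ ∃ Φ : Set ((ι → Set F) × (ι → Set F)),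
      ∀ r, P r ↔ ∀ G : ι → Set F, (G, fun i => relC r (G i)) ∈ Φ := by
  rintro ⟨Φ, hΦ⟩
  refine hrel ((hΦ rel).mpr fun G => ?_)
  obtain ⟨rel', hP, heq⟩ := hlocal G
  simpa only [heq] using (hΦ rel').mp hP G

/-- Over an infinite set of atoms `A`, there is no normal
characterization of the family of all pivotal consequence relations: there is no
cardinal `λ ≤ |F_c|` (represented by an index type `ι` with `|ι| ≤ |F_c|`) and relation
`Φ` on `P(F_c)^{2λ}` such that for every `|~`, `|~` is pivotal iff every tuple
`(Γ_1, …, Γ_λ, C_|~(Γ_1), …, C_|~(Γ_λ))` belongs to `Φ`. -/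
theorem stmt17 (A : Type u) [Infinite A] :
    ¬ ∃ (ι : Type u) (_ : Cardinal.mk ι ≤ Cardinal.mk (PropForm A))
        (Φ : Set ((ι → Set (PropForm A)) × (ι → Set (PropForm A)))),
      ∀ rel : Set (PropForm A) → PropForm A → Prop,
        isPivotal (satC (A := A)) rel ↔
          ∀ G : ι → Set (PropForm A), (G, fun i => relC rel (G i)) ∈ Φ := by
  rintro ⟨ι, hι, hchar⟩
  have hκ : ℵ₀ ≤ #(PropForm A) := aleph0_le_mk _
  have hnot : ¬ isPivotal satC (fewCounterModelsRel satC #(PropForm A)) :=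
    not_isPivotal_fewCounterModelsRel (fun v => ⟨_, PropForm.modSet_theory v⟩) (f := .fls)
      (fun _ => by simp [satC, PropForm.eval]) (one_le_aleph0.trans hκ)
      PropForm.mk_lt_mk_valuations
  refine not_exists_normal_characterization _ _ hnot (fun G => ?_) hchar
  obtain ⟨V, hV⟩ := exists_restrictRel_eq_on hκ hι le_rfl G
  exact ⟨_, isPivotal_restrictRel V, hV⟩
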